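/- For x ∈ D₁ = ℂ \ ((−∞,−1] ∪ [1,∞)), writing x = cos θ with θ = α + iβ, α ∈ (0,π), β ∈ ℝ, one has (x − i√(1−x²))/(x + i√(1−x²)) = e^{−2iθ}; in particular its modulus equals e^{2β}, and it is strictly less than 1 if and only if Im x > 0. -/

import Mathlib

/-!
With `x = cos θ` one has `1 - x² = sin² θ`, and `Re (sin θ) = sin α cosh β > 0` for
`0 < α < π`, so the principal square root of `1 - x²` is `sin θ` itself. The quotient is then
`e^{-iθ} / e^{iθ} = e^{-2iθ}`, of modulus `e^{2β}`, while `Im x = -sin α sinh β` has the sign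
of `-β`.
-/

/-- Principal square root of `1 - x²`. -/
noncomputable def sqrt1mx2 (x : ℂ) : ℂ := (1 - x ^ 2) ^ ((1 : ℂ) / 2)

namespace Complex

theorem sin_re (z : ℂ) : (sin z).re = Real.sin z.re * Real.cosh z.im := by
  conv_lhs => rw [← re_add_im z, sin_add_mul_I]
  simp [← ofReal_sin, ← ofReal_cos, ← ofReal_cosh, ← ofReal_sinh]

theorem cos_im (z : ℂ) : (cos z).im = -(Real.sin z.re * Real.sinh z.im) := by
  conv_lhs => rw [← re_add_im z, cos_add_mul_I]
  simp [← ofReal_sin, ← ofReal_cos, ← ofReal_cosh, ← ofReal_sinh]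

theorem sin_re_pos {z : ℂ} (h0 : 0 < z.re) (hπ : z.re < Real.pi) : 0 < (sin z).re := by
  rw [sin_re]
  exact mul_pos (Real.sin_pos_of_pos_of_lt_pi h0 hπ) (Real.cosh_pos _)

theorem cos_im_pos_iff {z : ℂ} (h0 : 0 < z.re) (hπ : z.re < Real.pi) :
    0 < (cos z).im ↔ z.im < 0 := by
  rw [cos_im, ← mul_neg, mul_pos_iff_of_pos_left (Real.sin_pos_of_pos_of_lt_pi h0 hπ), neg_pos,
    Real.sinh_neg_iff]

theorem cos_sub_I_mul_sin_div_cos_add_I_mul_sin (θ : ℂ) :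
    (cos θ - I * sin θ) / (cos θ + I * sin θ) = exp (-2 * I * θ) := by
  have hnum : cos θ - I * sin θ = exp (-θ * I) := by
    rw [exp_mul_I, cos_neg, sin_neg]; ring
  have hden : cos θ + I * sin θ = exp (θ * I) := by
    rw [exp_mul_I]; ring
  rw [hnum, hden, ← exp_sub]
  ring_nf

theorem norm_exp_neg_two_mul_I_mul (θ : ℂ) : ‖exp (-2 * I * θ)‖ = Real.exp (2 * θ.im) := by
  rw [norm_exp]
  simp

end Complex

open Complex in
theorem sqrt1mx2_cos {θ : ℂ} (h : 0 < (sin θ).re) : sqrt1mx2 (cos θ) = sin θ := by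
  rw [sqrt1mx2, ← sin_sq, one_div]
  exact sq_cpow_two_inv h

theorem w14_eq_exp (α β : ℝ) (hα0 : 0 < α) (hαπ : α < Real.pi) :
    let θ : ℂ := (α : ℂ) + (β : ℂ) * Complex.I
    let x : ℂ := Complex.cos θ
    let w : ℂ := (x - Complex.I * sqrt1mx2 x) / (x + Complex.I * sqrt1mx2 x)
    w = Complex.exp (-2 * Complex.I * θ) ∧
    ‖w‖ = Real.exp (2 * β) ∧
    (‖w‖ < 1 ↔ 0 < x.im) := by
  intro θ x w
  have h0 : 0 < θ.re := by simpa [θ] using hα0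
  have hπ : θ.re < Real.pi := by simpa [θ] using hαπ
  have him : θ.im = β := by simp [θ]
  have hw : w = Complex.exp (-2 * Complex.I * θ) := by
    simp only [w, x, sqrt1mx2_cos (Complex.sin_re_pos h0 hπ),
      Complex.cos_sub_I_mul_sin_div_cos_add_I_mul_sin]
  have hnorm : ‖w‖ = Real.exp (2 * β) := by
    rw [hw, Complex.norm_exp_neg_two_mul_I_mul, him]
  refine ⟨hw, hnorm, ?_⟩
  rw [hnorm, Real.exp_lt_one_iff, Complex.cos_im_pos_iff h0 hπ, him]
  constructor <;> intro h <;> linarith
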